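/- There exists a constant c > 0 such that for all sufficiently large τ and all T that are sufficiently large multiples of τ, the instance of the bandit-with-exposure model with k = 2 arms, n = 2 user types, P = (0.8, 0.2), δ = (0, ⌈τ/2⌉), and μ the 2×2 identity matrix (μ_{1,1} = μ_{2,2} = 1, μ_{1,2} = μ_{2,1} = 0) satisfies E[r^OPT] − E[r^PICO] ≥ c·τ. -/
import Mathlib


open scoped BigOperators Classical

namespace ExposureBandits

/-- Number of pulls of arm `a` in the (0-indexed) phase `j` of the pull sequence `pull`. -/
def pullsInPhase {k : ℕ} (T τ : ℕ) (pull : Fin T → Fin k) (j : ℕ) (a : Fin k) : ℕ :=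
  (Finset.univ.filter (fun t : Fin T =>
    j * τ ≤ (t : ℕ) ∧ (t : ℕ) < (j + 1) * τ ∧ pull t = a)).card

/-- Arm `a` is available at round `t` iff its exposure constraint was satisfied in every
completed phase. -/
def availableAt {k : ℕ} (T τ : ℕ) (δ : Fin k → ℕ) (pull : Fin T → Fin k)
    (t : Fin T) (a : Fin k) : Prop :=
  ∀ j : ℕ, (j + 1) * τ ≤ (t : ℕ) → δ a ≤ pullsInPhase T τ pull j a

/-- Conditional-expected reward of the pull sequence `pull` on the arrival sequence `q`:
pulls of unavailable (departed) arms yield zero utility. -/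
noncomputable def seqReward {k n : ℕ} (T τ : ℕ) (μ : Fin n → Fin k → ℝ) (δ : Fin k → ℕ)
    (pull : Fin T → Fin k) (q : Fin T → Fin n) : ℝ :=
  ∑ t : Fin T, if availableAt T τ δ pull t (pull t) then μ (q t) (pull t) else 0

/-- A deterministic online algorithm for the stochastic-optimization task: the arm pulled at
round `t` may depend only on the types observed in rounds `1,…,t`. -/
def Causal {k n T : ℕ} (f : (Fin T → Fin n) → Fin T → Fin k) : Prop :=
  ∀ q q' : Fin T → Fin n, ∀ t : Fin T,
    (∀ s : Fin T, s ≤ t → q s = q' s) → f q t = f q' t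

abbrev Alg (k n T : ℕ) := {f : (Fin T → Fin n) → Fin T → Fin k // Causal f}

/-- Probability of the i.i.d. arrival sequence `q` under the arrival distribution `P`. -/
noncomputable def seqProb {n : ℕ} (T : ℕ) (P : Fin n → ℝ) (q : Fin T → Fin n) : ℝ :=
  ∏ t : Fin T, P (q t)

/-- Expected reward of the algorithm `A`. -/
noncomputable def expReward {k n : ℕ} (T τ : ℕ) (P : Fin n → ℝ) (μ : Fin n → Fin k → ℝ)
    (δ : Fin k → ℕ) (A : Alg k n T) : ℝ :=
  ∑ q : Fin T → Fin n, seqProb T P q * seqReward T τ μ δ (A.1 q) q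

/-- The optimal expected reward: the value of the benchmark `OPT`. -/
noncomputable def optReward (k n T τ : ℕ) (P : Fin n → ℝ) (μ : Fin n → Fin k → ℝ)
    (δ : Fin k → ℕ) : ℝ :=
  ⨆ A : Alg k n T, expReward T τ P μ δ A

/-- Property 1 (phase independence): whenever the type prefixes of two phases agree, the
algorithm's pulls at the corresponding rounds agree. -/
def PhaseInd {k n T : ℕ} (τ : ℕ) (A : Alg k n T) : Prop :=
  ∀ q : Fin T → Fin n, ∀ i j s : ℕ, s < τ →
    ∀ (hi : i * τ + s < T) (hj : j * τ + s < T),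
      (∀ l : ℕ, l ≤ s → ∀ (hli : i * τ + l < T) (hlj : j * τ + l < T),
          q ⟨i * τ + l, hli⟩ = q ⟨j * τ + l, hlj⟩) →
      A.1 q ⟨i * τ + s, hi⟩ = A.1 q ⟨j * τ + s, hj⟩

/-- Property 2 (commitment to `Z`): the algorithm pulls only arms of `Z` and, with
probability 1, every arm of `Z` receives at least its exposure threshold in every phase. -/
def Committed {k n T : ℕ} (τ : ℕ) (δ : Fin k → ℕ) (Z : Finset (Fin k)) (A : Alg k n T) : Prop :=
  ∀ q : Fin T → Fin n,
    (∀ t : Fin T, A.1 q t ∈ Z) ∧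
    (∀ j : ℕ, (j + 1) * τ ≤ T → ∀ a ∈ Z, δ a ≤ pullsInPhase T τ (A.1 q) j a)

/-- The value of `PICO`: the best expected reward among phase-independent algorithms committed
to some subset of the arms. -/
noncomputable def picoReward (k n T τ : ℕ) (P : Fin n → ℝ) (μ : Fin n → Fin k → ℝ)
    (δ : Fin k → ℕ) : ℝ :=
  ⨆ A : {A : Alg k n T // PhaseInd τ A ∧ ∃ Z : Finset (Fin k), Committed τ δ Z A},
    expReward T τ P μ δ A.1


/-- The arrival distribution of Proposition 8 of the paper. -/
noncomputable def P12 : Fin 2 → ℝ := ![0.8, 0.2]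

/-- The utility matrix of Proposition 8 of the paper (the identity matrix). -/
noncomputable def mu12 : Fin 2 → Fin 2 → ℝ := ![![1, 0], ![0, 1]]

/-- Exposure thresholds `δ = (0, ⌈τ/2⌉)`. -/
def delta12 (τ : ℕ) : Fin 2 → ℕ := ![0, (τ + 1) / 2]


section Proof

open Finset

lemma sum_prob_prod {n T : ℕ} (h : Fin T → Fin n → ℝ) :
    ∑ q : Fin T → Fin n, ∏ t, h t (q t) = ∏ t, ∑ u, h t u := by
  rw [Finset.prod_univ_sum, Fintype.piFinset_univ]

lemma sum_seqProb {n T : ℕ} (P : Fin n → ℝ) (hP : ∑ u, P u = 1) :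
    ∑ q : Fin T → Fin n, seqProb T P q = 1 := by
  unfold seqProb
  rw [sum_prob_prod (fun _ u => P u)]
  simp [hP]

lemma seqProb_nonneg {n T : ℕ} (P : Fin n → ℝ) (hP0 : ∀ u, 0 ≤ P u) (q : Fin T → Fin n) :
    0 ≤ seqProb T P q :=
  Finset.prod_nonneg fun t _ => hP0 (q t)

lemma exp_comp {n T : ℕ} (P : Fin n → ℝ) (hP : ∑ u, P u = 1) (t₀ : Fin T) (g : Fin n → ℝ) :
    ∑ q : Fin T → Fin n, seqProb T P q * g (q t₀) = ∑ u, P u * g u := by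
  have h1 : ∀ q : Fin T → Fin n,
      seqProb T P q * g (q t₀) = ∏ t, (P (q t) * if t = t₀ then g (q t) else 1) := by
    intro q
    rw [Finset.prod_mul_distrib, Finset.prod_ite_eq' Finset.univ t₀ (fun t => g (q t))]
    simp [seqProb]
  simp_rw [h1]
  rw [sum_prob_prod (fun t u => P u * if t = t₀ then g u else 1)]
  have h2 : ∀ t : Fin T, (∑ u, P u * if t = t₀ then g u else 1)
      = if t = t₀ then ∑ u, P u * g u else 1 := by
    intro t
    by_cases h : t = t₀ <;> simp [h, hP]
  simp_rw [h2]
  rw [Finset.prod_ite_eq' Finset.univ t₀ (fun _ => ∑ u, P u * g u)]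
  simp

lemma exp_affine {n T : ℕ} (P : Fin n → ℝ) (hP : ∑ u, P u = 1)
    (c d : Fin T → ℝ) (g : Fin n → ℝ) :
    ∑ q : Fin T → Fin n, seqProb T P q * (∑ t, (c t + d t * g (q t)))
      = ∑ t, (c t + d t * ∑ u, P u * g u) := by
  have h1 : ∀ q : Fin T → Fin n, seqProb T P q * (∑ t, (c t + d t * g (q t)))
      = ∑ t, (seqProb T P q * c t + d t * (seqProb T P q * g (q t))) := by
    intro q
    rw [Finset.mul_sum]
    exact Finset.sum_congr rfl fun t _ => by ring
  simp_rw [h1]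
  rw [Finset.sum_comm]
  refine Finset.sum_congr rfl fun t _ => ?_
  rw [Finset.sum_add_distrib, ← Finset.sum_mul, sum_seqProb P hP, one_mul, ← Finset.mul_sum,
    exp_comp P hP t g]

lemma exp_sum_g {n T : ℕ} (P : Fin n → ℝ) (hP : ∑ u, P u = 1) (g : Fin n → ℝ) :
    ∑ q : Fin T → Fin n, seqProb T P q * (∑ t, g (q t)) = (T : ℝ) * ∑ u, P u * g u := by
  have h := exp_affine (T := T) P hP (fun _ => (0:ℝ)) (fun _ => (1:ℝ)) g
  simpa [Finset.sum_const, Finset.card_univ] using h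

lemma exp_const_plus {n T : ℕ} (P : Fin n → ℝ) (hP : ∑ u, P u = 1) (K : ℝ)
    (g : Fin n → ℝ) :
    ∑ q : Fin T → Fin n, seqProb T P q * (K + ∑ t, g (q t))
      = K + (T : ℝ) * ∑ u, P u * g u := by
  simp_rw [mul_add]
  rw [Finset.sum_add_distrib, ← Finset.sum_mul, sum_seqProb P hP, one_mul,
    exp_sum_g P hP g]

lemma exp_mono {n T : ℕ} (P : Fin n → ℝ) (hP0 : ∀ u, 0 ≤ P u)
    (r s : (Fin T → Fin n) → ℝ) (h : ∀ q, r q ≤ s q) :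
    ∑ q : Fin T → Fin n, seqProb T P q * r q ≤ ∑ q, seqProb T P q * s q :=
  Finset.sum_le_sum fun q _ => mul_le_mul_of_nonneg_left (h q) (seqProb_nonneg P hP0 q)

lemma P12_sum : ∑ u, P12 u = 1 := by
  rw [Fin.sum_univ_two]; norm_num [P12]

lemma P12_nonneg : ∀ u, 0 ≤ P12 u := by
  intro u; fin_cases u <;> norm_num [P12]

lemma mu12_eq (u a : Fin 2) : mu12 u a = if u = a then 1 else 0 := by
  fin_cases u <;> fin_cases a <;> simp [mu12]

lemma fin2_cases (a : Fin 2) : a = 0 ∨ a = 1 := by omega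

/-- indicator of type 0 -/
noncomputable def g0 : Fin 2 → ℝ := fun u => if u = 0 then 1 else 0
/-- indicator of type 1 -/
noncomputable def g1 : Fin 2 → ℝ := fun u => if u = 1 then 1 else 0

lemma Pg0 : ∑ u, P12 u * g0 u = 0.8 := by
  rw [Fin.sum_univ_two]; norm_num [P12, g0]

lemma Pg1 : ∑ u, P12 u * g1 u = 0.2 := by
  rw [Fin.sum_univ_two]; norm_num [P12, g1]

lemma expReward_le {T τ : ℕ} (δ : Fin 2 → ℕ) (A : Alg 2 2 T) :
    expReward T τ P12 mu12 δ A ≤ T := by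
  unfold expReward
  have h1 : ∀ q : Fin T → Fin 2, seqReward T τ mu12 δ (A.1 q) q ≤ T := by
    intro q
    unfold seqReward
    calc ∑ t : Fin T, (if availableAt T τ δ (A.1 q) t (A.1 q t) then mu12 (q t) (A.1 q t) else 0)
        ≤ ∑ _t : Fin T, (1 : ℝ) := by
          refine Finset.sum_le_sum fun t _ => ?_
          rw [mu12_eq]
          split
          · split <;> norm_num
          · norm_num
      _ = T := by simp
  calc ∑ q : Fin T → Fin 2, seqProb T P12 q * seqReward T τ mu12 δ (A.1 q) q
      ≤ ∑ q : Fin T → Fin 2, seqProb T P12 q * T :=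
        Finset.sum_le_sum fun q _ =>
          mul_le_mul_of_nonneg_left (h1 q) (seqProb_nonneg P12 P12_nonneg q)
    _ = T := by rw [← Finset.sum_mul, sum_seqProb P12 P12_sum, one_mul]

/-- The algorithm that always pulls the arm matching the current user type. -/
def matchAlg (T : ℕ) : Alg 2 2 T := ⟨fun q => q, fun _ _ t h => h t le_rfl⟩

lemma opt_lower (τ N : ℕ) (hτ : 1 ≤ τ) (hN : 1 ≤ N) :
    (τ : ℝ) + 0.8 * (((N * τ : ℕ) : ℝ) - (τ : ℝ))
      ≤ optReward 2 2 (N * τ) τ P12 mu12 (delta12 τ) := by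
  set T := N * τ with hT
  have hτT : τ ≤ T := Nat.le_mul_of_pos_left τ (by omega)
  set c : Fin T → ℝ := fun t => if (t : ℕ) < τ then 1 else 0 with hc
  set d : Fin T → ℝ := fun t => if (t : ℕ) < τ then 0 else 1 with hd
  have hterm : ∀ q : Fin T → Fin 2, ∀ t : Fin T,
      c t + d t * g0 (q t)
        ≤ if availableAt T τ (delta12 τ) q t (q t) then mu12 (q t) (q t) else 0 := by
    intro q t
    have hmu : mu12 (q t) (q t) = 1 := by rw [mu12_eq]; simp
    by_cases h1 : (t : ℕ) < τ
    · have hav : availableAt T τ (delta12 τ) q t (q t) := by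
        intro j hj
        have : τ ≤ (j + 1) * τ := Nat.le_mul_of_pos_left τ (Nat.succ_pos j)
        omega
      rw [if_pos hav, hmu]
      have hg : g0 (q t) ≤ 1 := by
        unfold g0; split <;> norm_num
      simp only [hc, hd, if_pos h1]
      linarith
    · rcases fin2_cases (q t) with h0 | h0
      · have hav : availableAt T τ (delta12 τ) q t (q t) := by
          intro j _
          rw [h0]
          simp [delta12]
        rw [if_pos hav, hmu]
        simp [hc, hd, h1, g0, h0]
      · have he : c t + d t * g0 (q t) = 0 := by simp [hc, hd, h1, g0, h0]
        rw [he]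
        split
        · rw [hmu]; norm_num
        · exact le_refl _
  have hlow : ∑ q : Fin T → Fin 2, seqProb T P12 q * (∑ t, (c t + d t * g0 (q t)))
      ≤ expReward T τ P12 mu12 (delta12 τ) (matchAlg T) := by
    refine exp_mono P12 P12_nonneg _ _ fun q => ?_
    show (∑ t, (c t + d t * g0 (q t))) ≤ seqReward T τ mu12 (delta12 τ) q q
    unfold seqReward
    exact Finset.sum_le_sum fun t _ => hterm q t
  rw [exp_affine P12 P12_sum c d g0, Pg0] at hlow
  have hsum : ∑ t : Fin T, (c t + d t * 0.8)
      = (τ : ℝ) + 0.8 * ((T : ℝ) - (τ : ℝ)) := by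
    have hre : (∑ t : Fin T, (c t + d t * 0.8))
        = ∑ t : Fin T, ((if (t:ℕ) < τ then (1:ℝ) else 0) + (if (t:ℕ) < τ then (0:ℝ) else 1) * 0.8) :=
      rfl
    rw [hre, Fin.sum_univ_eq_sum_range
      (fun i => (if i < τ then (1:ℝ) else 0) + (if i < τ then (0:ℝ) else 1) * 0.8) T]
    rw [Finset.range_eq_Ico, ← Finset.sum_Ico_consecutive _ (Nat.zero_le τ) hτT]
    have e1 : ∑ i ∈ Finset.Ico 0 τ,
        ((if i < τ then (1:ℝ) else 0) + (if i < τ then (0:ℝ) else 1) * 0.8) = τ := by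
      have hc1 : ∀ i ∈ Finset.Ico 0 τ,
          ((if i < τ then (1:ℝ) else 0) + (if i < τ then (0:ℝ) else 1) * 0.8) = 1 := by
        intro i hi
        rw [Finset.mem_Ico] at hi
        simp [hi.2]
      rw [Finset.sum_congr rfl hc1, Finset.sum_const, Nat.card_Ico]
      simp
    have e2 : ∑ i ∈ Finset.Ico τ T,
        ((if i < τ then (1:ℝ) else 0) + (if i < τ then (0:ℝ) else 1) * 0.8)
        = ((T - τ : ℕ) : ℝ) * 0.8 := by
      have hc2 : ∀ i ∈ Finset.Ico τ T,
          ((if i < τ then (1:ℝ) else 0) + (if i < τ then (0:ℝ) else 1) * 0.8) = 0.8 := by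
        intro i hi
        rw [Finset.mem_Ico] at hi
        have hni : ¬ i < τ := by omega
        simp [hni]
      rw [Finset.sum_congr rfl hc2, Finset.sum_const, Nat.card_Ico]
      simp [mul_comm]
    rw [e1, e2, Nat.cast_sub hτT]
    ring
  rw [hsum] at hlow
  refine le_trans hlow ?_
  unfold optReward
  have hbdd : BddAbove (Set.range (expReward T τ P12 mu12 (delta12 τ) : Alg 2 2 T → ℝ)) := by
    refine ⟨(T : ℝ), ?_⟩
    rintro x ⟨A, rfl⟩
    exact expReward_le (delta12 τ) A
  exact le_ciSup hbdd (matchAlg T)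

lemma pico_upper (τ N : ℕ) (hτ : 1 ≤ τ) (hN : 1 ≤ N) :
    picoReward 2 2 (N * τ) τ P12 mu12 (delta12 τ) ≤ 0.8 * ((N * τ : ℕ) : ℝ) := by
  set T := N * τ with hT
  apply Real.iSup_le _ (by positivity)
  rintro ⟨A, hPI, Z, hZ⟩
  show expReward T τ P12 mu12 (delta12 τ) A ≤ 0.8 * (T : ℝ)
  by_cases h1 : (1 : Fin 2) ∈ Z
  · -- arm 1 is committed: at least `N⌈τ/2⌉` pulls of arm 1 in total
    set K : ℝ := (T : ℝ) - (N : ℝ) * (((τ + 1) / 2 : ℕ) : ℝ) with hK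
    have hq : ∀ q : Fin T → Fin 2,
        seqReward T τ mu12 (delta12 τ) (A.1 q) q ≤ K + ∑ t, g1 (q t) := by
      intro q
      have hcard : N * ((τ + 1) / 2)
          ≤ (Finset.univ.filter (fun t : Fin T => A.1 q t = 1)).card := by
        have hdisj : ∀ x ∈ Finset.range N, ∀ y ∈ Finset.range N, x ≠ y →
            Disjoint (Finset.univ.filter (fun t : Fin T =>
                x * τ ≤ (t : ℕ) ∧ (t : ℕ) < (x + 1) * τ ∧ A.1 q t = 1))
              (Finset.univ.filter (fun t : Fin T =>
                y * τ ≤ (t : ℕ) ∧ (t : ℕ) < (y + 1) * τ ∧ A.1 q t = 1)) := by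
          intro x _ y _ hxy
          rw [Finset.disjoint_left]
          intro t htx hty
          rw [Finset.mem_filter] at htx hty
          obtain ⟨-, hx1, hx2, -⟩ := htx
          obtain ⟨-, hy1, hy2, -⟩ := hty
          rcases Nat.lt_or_ge x y with h | h
          · have : (x + 1) * τ ≤ y * τ := Nat.mul_le_mul_right τ h
            omega
          · have h' : y < x := lt_of_le_of_ne h (Ne.symm hxy)
            have : (y + 1) * τ ≤ x * τ := Nat.mul_le_mul_right τ h'
            omega
        have h1card : ∀ j ∈ Finset.range N, (τ + 1) / 2 ≤
            (Finset.univ.filter (fun t : Fin T =>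
              j * τ ≤ (t : ℕ) ∧ (t : ℕ) < (j + 1) * τ ∧ A.1 q t = 1)).card := by
          intro j hj
          rw [Finset.mem_range] at hj
          have hjT : (j + 1) * τ ≤ T := by
            rw [hT]
            exact Nat.mul_le_mul_right τ hj
          have hc := (hZ q).2 j hjT 1 h1
          simpa [delta12, pullsInPhase] using hc
        calc N * ((τ + 1) / 2) = ∑ _j ∈ Finset.range N, (τ + 1) / 2 := by
              rw [Finset.sum_const, Finset.card_range, smul_eq_mul]
          _ ≤ ∑ j ∈ Finset.range N, (Finset.univ.filter (fun t : Fin T =>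
                j * τ ≤ (t : ℕ) ∧ (t : ℕ) < (j + 1) * τ ∧ A.1 q t = 1)).card :=
              Finset.sum_le_sum h1card
          _ = ((Finset.range N).biUnion (fun j => Finset.univ.filter (fun t : Fin T =>
                j * τ ≤ (t : ℕ) ∧ (t : ℕ) < (j + 1) * τ ∧ A.1 q t = 1))).card :=
              (Finset.card_biUnion hdisj).symm
          _ ≤ (Finset.univ.filter (fun t : Fin T => A.1 q t = 1)).card := by
              refine Finset.card_le_card ?_
              intro t ht
              rw [Finset.mem_biUnion] at ht
              obtain ⟨j, -, htj⟩ := ht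
              rw [Finset.mem_filter] at htj
              rw [Finset.mem_filter]
              exact ⟨Finset.mem_univ t, htj.2.2.2⟩
      have hterm : ∀ t : Fin T,
          (if availableAt T τ (delta12 τ) (A.1 q) t (A.1 q t) then mu12 (q t) (A.1 q t) else 0)
            ≤ (if A.1 q t = 0 then (1:ℝ) else 0) + g1 (q t) := by
        intro t
        rw [mu12_eq]
        have hg1 : (0:ℝ) ≤ g1 (q t) := by unfold g1; split <;> norm_num
        rcases fin2_cases (A.1 q t) with hp | hp <;> rcases fin2_cases (q t) with hu | hu <;>
          rw [hp, hu] <;> simp [g1] <;> split <;> norm_num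
      have hstep : seqReward T τ mu12 (delta12 τ) (A.1 q) q
          ≤ ∑ t : Fin T, ((if A.1 q t = 0 then (1:ℝ) else 0) + g1 (q t)) := by
        unfold seqReward
        exact Finset.sum_le_sum fun t _ => hterm t
      have hsplit : ∑ t : Fin T, ((if A.1 q t = 0 then (1:ℝ) else 0) + g1 (q t))
          = (∑ t : Fin T, (if A.1 q t = 0 then (1:ℝ) else 0)) + ∑ t, g1 (q t) :=
        Finset.sum_add_distrib
      have hcount : ∑ t : Fin T, (if A.1 q t = 0 then (1:ℝ) else 0)
          = (T : ℝ) - ((Finset.univ.filter (fun t : Fin T => A.1 q t = 1)).card : ℝ) := by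
        have he : ∀ t : Fin T, (if A.1 q t = 0 then (1:ℝ) else 0)
            = 1 - (if A.1 q t = 1 then (1:ℝ) else 0) := by
          intro t
          rcases fin2_cases (A.1 q t) with hp | hp <;> simp [hp]
        simp_rw [he]
        rw [Finset.sum_sub_distrib, Finset.sum_const, Finset.sum_boole]
        simp
      have hcast : (N : ℝ) * (((τ + 1) / 2 : ℕ) : ℝ)
          ≤ ((Finset.univ.filter (fun t : Fin T => A.1 q t = 1)).card : ℝ) := by
        rw [← Nat.cast_mul]
        exact_mod_cast hcard
      refine le_trans hstep ?_
      rw [hsplit, hcount, hK]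
      linarith
    have hmain : expReward T τ P12 mu12 (delta12 τ) A ≤ K + (T : ℝ) * 0.2 := by
      unfold expReward
      refine le_trans (exp_mono P12 P12_nonneg _ _ hq) ?_
      rw [exp_const_plus P12 P12_sum K g1, Pg1]
    have hce : (τ : ℝ) ≤ 2 * (((τ + 1) / 2 : ℕ) : ℝ) := by
      exact_mod_cast (by omega : τ ≤ 2 * ((τ + 1) / 2))
    have hTR : (T : ℝ) = (N : ℝ) * (τ : ℝ) := by rw [hT]; push_cast; ring
    have hN0 : (0 : ℝ) ≤ N := Nat.cast_nonneg N
    have hprod : (0:ℝ) ≤ (N:ℝ) * (2 * (((τ + 1) / 2 : ℕ) : ℝ) - τ) :=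
      mul_nonneg hN0 (by linarith)
    rw [hK] at hmain
    nlinarith [hmain]
  · -- arm 1 not committed: only arm 0 is pulled
    have hp0 : ∀ q : Fin T → Fin 2, ∀ t : Fin T, A.1 q t = 0 := by
      intro q t
      rcases fin2_cases (A.1 q t) with h | h
      · exact h
      · exact absurd (h ▸ (hZ q).1 t) h1
    have hq : ∀ q : Fin T → Fin 2,
        seqReward T τ mu12 (delta12 τ) (A.1 q) q ≤ (0:ℝ) + ∑ t, g0 (q t) := by
      intro q
      rw [zero_add]
      unfold seqReward
      refine Finset.sum_le_sum fun t _ => ?_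
      rw [hp0 q t, mu12_eq]
      rcases fin2_cases (q t) with h | h <;> rw [h] <;> simp [g0] <;> split <;> norm_num
    have hmain : expReward T τ P12 mu12 (delta12 τ) A ≤ (0:ℝ) + (T : ℝ) * 0.8 := by
      unfold expReward
      refine le_trans (exp_mono P12 P12_nonneg _ _ hq) ?_
      rw [exp_const_plus P12 P12_sum 0 g0, Pg0]
    linarith

end Proof

/-- Proposition 8 of the paper: on this instance, restricting to phase-independent committed
algorithms loses `Ω(τ)` reward compared to `OPT`. -/
theorem pico_loses_tau :
    ∃ c : ℝ, 0 < c ∧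
    ∃ τ₀ : ℕ, ∀ τ : ℕ, τ₀ ≤ τ →
      ∃ N₀ : ℕ, ∀ N : ℕ, N₀ ≤ N →
        optReward 2 2 (N * τ) τ P12 mu12 (delta12 τ)
            - picoReward 2 2 (N * τ) τ P12 mu12 (delta12 τ)
          ≥ c * (τ : ℝ) := by
  refine ⟨0.2, by norm_num, 1, fun τ hτ => ⟨1, fun N hN => ?_⟩⟩
  have h1 := opt_lower τ N hτ hN
  have h2 := pico_upper τ N hτ hN
  have hτT : (τ : ℝ) ≤ ((N * τ : ℕ) : ℝ) := by
    exact_mod_cast Nat.le_mul_of_pos_left τ (by omega : 0 < N)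
  linarith

end ExposureBandits
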